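/- Let j : [0,∞) → [0,∞) be convex and C¹ with j(0)=0, j'(0) ≥ 0, and j' concave on [0,∞). For R ≥ 1 let j_R(v):=min(j(v),j(R)). Then for all v₁, v₂ > 0, (v₁+v₂)·(j_R(v₁+v₂) − j_R(v₁) − j_R(v₂)) ≤ 2·(v₂·j_R(v₁) + v₁·j_R(v₂)). -/

import Mathlib

/-!
Write `p` for the derivative of `j` on `[0, ∞)`. Concavity of `p` together with `p(0) ≥ 0` makes
`p` star-shaped from the origin (`t p(x) ≤ p(t x)` for `t ∈ [0, 1]`), hence subadditive.
Subadditivity makes `x ↦ j(x + w) - j(x) - x p(w)` nonincreasing, so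
`j(v + w) - j(v) - j(w) ≤ v p(w)`; star-shapedness gives `p(s) ≥ (s / v) p(v)` on `[0, v]`, and
integrating this gives `v p(v) ≤ 2 j(v)`. Together these give the untruncated estimate.
Truncating at `j(R)` changes nothing unless `j(vᵢ) > j(R)` for some `i`, and then the left-hand
side is already nonpositive.
-/

open Set

theorem ConcaveOn.mul_le_apply_mul {g : ℝ → ℝ} (hg : ConcaveOn ℝ (Ici 0) g) (hg0 : 0 ≤ g 0)
    {t x : ℝ} (ht₀ : 0 ≤ t) (ht₁ : t ≤ 1) (hx : 0 ≤ x) : t * g x ≤ g (t * x) := by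
  have h := hg.2 (mem_Ici.2 hx) self_mem_Ici ht₀ (sub_nonneg.2 ht₁) (add_sub_cancel t 1)
  simp only [smul_eq_mul, mul_zero, add_zero] at h
  nlinarith [mul_nonneg (sub_nonneg.2 ht₁) hg0]

theorem ConcaveOn.apply_add_le {g : ℝ → ℝ} (hg : ConcaveOn ℝ (Ici 0) g) (hg0 : 0 ≤ g 0)
    {a b : ℝ} (ha : 0 ≤ a) (hb : 0 ≤ b) : g (a + b) ≤ g a + g b := by
  rcases (add_nonneg ha hb).eq_or_lt with hab | hab
  · obtain ⟨rfl, rfl⟩ : a = 0 ∧ b = 0 := ⟨by linarith, by linarith⟩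
    simpa using hg0
  have key : ∀ c, 0 ≤ c → c ≤ a + b → c / (a + b) * g (a + b) ≤ g c := fun c hc₀ hc₁ => by
    simpa [div_mul_cancel₀ c hab.ne'] using
      hg.mul_le_apply_mul hg0 (div_nonneg hc₀ hab.le) ((div_le_one hab).2 hc₁) hab.le
  have hsplit : g (a + b) = a / (a + b) * g (a + b) + b / (a + b) * g (a + b) := by
    field_simp
  linarith [key a ha (by linarith), key b hb (by linarith)]

theorem hasDerivAt_derivWithin_Ici {f : ℝ → ℝ} {a x : ℝ} (hf : DifferentiableOn ℝ f (Ici a))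
    (hx : a < x) : HasDerivAt f (derivWithin f (Ici a) x) x := by
  rw [derivWithin_of_mem_nhds (Ici_mem_nhds hx)]
  exact (hf.differentiableAt (Ici_mem_nhds hx)).hasDerivAt

section

variable {j : ℝ → ℝ}

theorem sub_sub_le_mul_derivWithin_of_subadditive (hj : DifferentiableOn ℝ j (Ici 0))
    {v w : ℝ} (hv : 0 ≤ v) (hw : 0 < w)
    (hsub : ∀ x, 0 < x →
      derivWithin j (Ici 0) (x + w) ≤ derivWithin j (Ici 0) x + derivWithin j (Ici 0) w) :
    j (v + w) - j v - j w + j 0 ≤ v * derivWithin j (Ici 0) w := by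
  set j' := derivWithin j (Ici 0)
  have hj'_at : ∀ x, 0 < x → HasDerivAt j (j' x) x := fun x hx => hasDerivAt_derivWithin_Ici hj hx
  have hG : AntitoneOn (fun x => j (x + w) - j x - x * j' w) (Ici 0) := by
    refine antitoneOn_of_hasDerivWithinAt_nonpos (convex_Ici 0)
      (f' := fun x => j' (x + w) - j' x - j' w) ?_ (fun x hx => ?_) (fun x hx => ?_)
    · have hshift : ContinuousOn (fun x => j (x + w)) (Ici 0) :=
        hj.continuousOn.comp (continuousOn_id.add continuousOn_const)
          fun x (hx : 0 ≤ x) => show 0 ≤ x + w by linarith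
      exact (hshift.sub hj.continuousOn).sub (continuousOn_id.mul continuousOn_const)
    · rw [interior_Ici] at hx
      have hshift := (hj'_at (x + w) (by linarith [mem_Ioi.1 hx])).comp_add_const x w
      exact ((hshift.sub (hj'_at x hx)).sub ((hasDerivAt_id x).mul_const (j' w) |>.congr_deriv
        (one_mul _))).hasDerivWithinAt
    · rw [interior_Ici] at hx
      linarith [hsub x hx]
  have := hG self_mem_Ici (mem_Ici.2 hv) hv
  simp only [zero_add, zero_mul, sub_zero] at this
  linarith

theorem mul_derivWithin_le_two_mul_sub (hj : DifferentiableOn ℝ j (Ici 0)) {v : ℝ} (hv : 0 < v)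
    (hlow : ∀ s ∈ Ioo 0 v, s / v * derivWithin j (Ici 0) v ≤ derivWithin j (Ici 0) s) :
    v * derivWithin j (Ici 0) v ≤ 2 * (j v - j 0) := by
  set j' := derivWithin j (Ici 0)
  set c := j' v / (2 * v)
  have hH : MonotoneOn (fun x => j x - x * x * c) (Icc 0 v) := by
    refine monotoneOn_of_hasDerivWithinAt_nonneg (convex_Icc 0 v)
      (f' := fun x => j' x - (1 * x + x * 1) * c) ?_ (fun x hx => ?_) (fun x hx => ?_)
    · exact (hj.continuousOn.mono Icc_subset_Ici_self).sub
        ((continuousOn_id.mul continuousOn_id).mul continuousOn_const)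
    · rw [interior_Icc] at hx
      exact ((hasDerivAt_derivWithin_Ici hj hx.1).sub
        (((hasDerivAt_id x).mul (hasDerivAt_id x)).mul_const c)).hasDerivWithinAt
    · rw [interior_Icc] at hx
      have hc : (1 * x + x * 1) * c = x / v * j' v := by
        simp only [c]; field_simp; ring
      simpa only [sub_nonneg, hc] using hlow x hx
  have := hH (left_mem_Icc.2 hv.le) (right_mem_Icc.2 hv.le) hv.le
  have hv2 : v * v * c = v * j' v / 2 := by simp only [c]; field_simp
  simp only [zero_mul, sub_zero, hv2] at this
  linarith

theorem add_mul_apply_add_sub_sub_le (hj : DifferentiableOn ℝ j (Ici 0))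
    (hj' : ConcaveOn ℝ (Ici 0) (derivWithin j (Ici 0))) (hj'0 : 0 ≤ derivWithin j (Ici 0) 0)
    (hj0 : j 0 = 0) {v w : ℝ} (hv : 0 < v) (hw : 0 < w) :
    (v + w) * (j (v + w) - j v - j w) ≤ 2 * (w * j v + v * j w) := by
  set j' := derivWithin j (Ici 0)
  have hincr : ∀ {x y : ℝ}, 0 < x → 0 < y → j (x + y) - j x - j y ≤ x * j' y := fun hx hy => by
    simpa [hj0] using sub_sub_le_mul_derivWithin_of_subadditive hj hx.le hy
      fun z hz => hj'.apply_add_le hj'0 hz.le hy.le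
  have hkey : ∀ {u : ℝ}, 0 < u → u * j' u ≤ 2 * j u := fun {u} hu => by
    simpa [hj0] using mul_derivWithin_le_two_mul_sub hj hu fun s hs => by
      simpa [div_mul_cancel₀ s hu.ne'] using
        hj'.mul_le_apply_mul hj'0 (div_nonneg hs.1.le hu.le) ((div_le_one hu).2 hs.2.le) hu.le
  have hvw := hincr hv hw
  have hwv : j (v + w) - j v - j w ≤ w * j' v := by
    rw [add_comm v w]; linarith [hincr hw hv]
  calc (v + w) * (j (v + w) - j v - j w)
      = w * (j (v + w) - j v - j w) + v * (j (v + w) - j v - j w) := by ring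
    _ ≤ v * (w * j' w) + w * (v * j' v) := by
      linarith [mul_le_mul_of_nonneg_left hvw hw.le, mul_le_mul_of_nonneg_left hwv hv.le]
    _ ≤ v * (2 * j w) + w * (2 * j v) :=
      add_le_add (mul_le_mul_of_nonneg_left (hkey hw) hv.le)
        (mul_le_mul_of_nonneg_left (hkey hv) hw.le)
    _ = 2 * (w * j v + v * j w) := by ring

end

theorem add_mul_min_sub_le {v w a b c m : ℝ} (hv : 0 ≤ v) (hw : 0 ≤ w) (ha : 0 ≤ a) (hb : 0 ≤ b)
    (hm : 0 ≤ m) (h : (v + w) * (c - a - b) ≤ 2 * (w * a + v * b)) :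
    (v + w) * (min c m - min a m - min b m) ≤ 2 * (w * min a m + v * min b m) := by
  have hrhs : 0 ≤ 2 * (w * min a m + v * min b m) := by positivity
  rcases le_or_gt a m with ham | hma
  · rcases le_or_gt b m with hbm | hmb
    · rw [min_eq_left ham, min_eq_left hbm]
      nlinarith [min_le_left c m]
    · have hneg : min c m - min a m - min b m ≤ 0 := by
        linarith [min_le_right c m, min_eq_right hmb.le, le_min ha hm]
      exact (mul_nonpos_of_nonneg_of_nonpos (add_nonneg hv hw) hneg).trans hrhs
  · have hneg : min c m - min a m - min b m ≤ 0 := by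
      linarith [min_le_right c m, min_eq_right hma.le, le_min hb hm]
    exact (mul_nonpos_of_nonneg_of_nonpos (add_nonneg hv hw) hneg).trans hrhs

theorem truncation_superadditivity_general (j : ℝ → ℝ)
    (hjC1 : ContDiffOn ℝ 1 j (Ici 0))
    (hj'conc : ConcaveOn ℝ (Ici 0) (derivWithin j (Ici 0)))
    (hjnonneg : ∀ v, 0 ≤ v → 0 ≤ j v)
    (hj0 : j 0 = 0) (hj'0 : 0 ≤ derivWithin j (Ici 0) 0)
    (R : ℝ) (hR : 1 ≤ R)
    (v₁ v₂ : ℝ) (h1 : 0 < v₁) (h2 : 0 < v₂) :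
    (v₁ + v₂) * (min (j (v₁ + v₂)) (j R) - min (j v₁) (j R) - min (j v₂) (j R)) ≤
      2 * (v₂ * min (j v₁) (j R) + v₁ * min (j v₂) (j R)) :=
  add_mul_min_sub_le h1.le h2.le (hjnonneg v₁ h1.le) (hjnonneg v₂ h2.le)
    (hjnonneg R (zero_le_one.trans hR))
    (add_mul_apply_add_sub_sub_le (hjC1.differentiableOn one_ne_zero) hj'conc hj'0 hj0 h1 h2)

/-- superadditivity estimate for the truncation `j_R = min(j, j(R))` of a
convex `C¹` function `j` with concave derivative, `j(0)=0` and `j'(0) ≥ 0`: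
`(v₁+v₂)(j_R(v₁+v₂) − j_R(v₁) − j_R(v₂)) ≤ 2 (v₂ j_R(v₁) + v₁ j_R(v₂))`. -/
theorem truncation_superadditivity (j : ℝ → ℝ)
    (hjconv : ConvexOn ℝ (Ici 0) j)
    (hjC1 : ContDiffOn ℝ 1 j (Ici 0))
    (hj'conc : ConcaveOn ℝ (Ici 0) (derivWithin j (Ici 0)))
    (hjnonneg : ∀ v, 0 ≤ v → 0 ≤ j v)
    (hj0 : j 0 = 0) (hj'0 : 0 ≤ derivWithin j (Ici 0) 0)
    (R : ℝ) (hR : 1 ≤ R)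
    (v₁ v₂ : ℝ) (h1 : 0 < v₁) (h2 : 0 < v₂) :
    (v₁ + v₂) * (min (j (v₁ + v₂)) (j R) - min (j v₁) (j R) - min (j v₂) (j R)) ≤
      2 * (v₂ * min (j v₁) (j R) + v₁ * min (j v₂) (j R)) :=
  truncation_superadditivity_general j hjC1 hj'conc hjnonneg hj0 hj'0 R hR v₁ v₂ h1 h2
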